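/- arXiv:1506.08765 — 6 statements merged into one kernel-verified Lean document; each statement's English description precedes it below -/
import Mathlib

section
/- Let M_1, …, M_n ∈ SE(3) be represented as 4×4 homogeneous matrices, let M ∈ ℝ^{4n×4} be their vertical stack, and let X ∈ ℝ^{4n×4n} be the block matrix whose (i,j)-th 4×4 block is M_i M_j⁻¹ (in particular the diagonal blocks are I_4). Then X = M · M⁻♭, where M⁻♭ ∈ ℝ^{4×4n} is the horizontal concatenation [M_1⁻¹ M_2⁻¹ … M_n⁻¹], and rank(X) = 4. -/
open Matrix

noncomputable section

/-- Index type for 4×4 homogeneous matrices. -/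
abbrev Idx4 : Type := Fin 3 ⊕ Fin 1

/-- The 4×4 homogeneous matrix `[[R, t],[0,1]]`. -/
def homog (R : Matrix (Fin 3) (Fin 3) ℝ) (t : Fin 3 → ℝ) : Matrix Idx4 Idx4 ℝ :=
  Matrix.fromBlocks R (Matrix.of fun i (_ : Fin 1) => t i) 0 1

/-- `A` is an SE(3) element written as a 4×4 homogeneous matrix. -/
def IsSE3 (A : Matrix Idx4 Idx4 ℝ) : Prop :=
  ∃ (R : Matrix (Fin 3) (Fin 3) ℝ) (t : Fin 3 → ℝ),
    Rᵀ * R = 1 ∧ R.det = 1 ∧ A = homog R t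

lemma IsSE3.det_eq_one {A : Matrix Idx4 Idx4 ℝ} (h : IsSE3 A) : A.det = 1 := by
  obtain ⟨R, t, _, hdet, rfl⟩ := h
  simp [homog, Matrix.det_fromBlocks_zero₂₁, hdet]

/-- if `M` is the vertical stack of the absolute motions `M_1, …, M_n`
and `X` is the block matrix of relative motions `M_i M_j⁻¹`, then
`X = M · M⁻♭` where `M⁻♭ = [M_1⁻¹ … M_n⁻¹]`, and `rank X = 4`. -/
theorem block_matrix_factorization_and_rank
    (n : ℕ) (hn : 1 ≤ n)
    (Ms : Fin n → Matrix Idx4 Idx4 ℝ) (hMs : ∀ i, IsSE3 (Ms i))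
    (M : Matrix (Fin n × Idx4) Idx4 ℝ)
    (hM : ∀ i r c, M (i, r) c = Ms i r c)
    (Mflat : Matrix Idx4 (Fin n × Idx4) ℝ)
    (hMflat : ∀ r j c, Mflat r (j, c) = (Ms j)⁻¹ r c)
    (X : Matrix (Fin n × Idx4) (Fin n × Idx4) ℝ)
    (hX : ∀ i r j c, X (i, r) (j, c) = (Ms i * (Ms j)⁻¹) r c) :
    X = M * Mflat ∧ X.rank = 4 := by
  have hfact : X = M * Mflat := by
    ext ⟨i, r⟩ ⟨j, c⟩
    rw [hX, Matrix.mul_apply, Matrix.mul_apply]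
    exact Finset.sum_congr rfl fun s _ => by rw [hM, hMflat]
  refine ⟨hfact, ?_⟩
  have hcard : Fintype.card Idx4 = 4 := by simp
  -- upper bound
  have hle : X.rank ≤ 4 := by
    rw [hfact]
    calc (M * Mflat).rank ≤ Mflat.rank := Matrix.rank_mul_le_right M Mflat
    _ ≤ Fintype.card Idx4 := Mflat.rank_le_card_height
    _ = 4 := hcard
  -- lower bound
  set i0 : Fin n := ⟨0, hn⟩
  have hinv : Ms i0 * (Ms i0)⁻¹ = 1 :=
    Matrix.mul_nonsing_inv _ (by rw [(hMs i0).det_eq_one]; norm_num)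
  set E : Matrix Idx4 (Fin n × Idx4) ℝ := Matrix.of fun r p => if p = (i0, r) then 1 else 0
  have hE : E * X * Eᵀ = 1 := by
    ext r c
    rw [Matrix.mul_apply]
    have h1 : ∀ p, (E * X) r p = X (i0, r) p := by
      intro p
      rw [Matrix.mul_apply]
      rw [Finset.sum_eq_single (i0, r)]
      · simp [E]
      · intro b _ hb; simp [E, hb]
      · intro h; exact absurd (Finset.mem_univ _) h
    simp only [h1, Matrix.transpose_apply, E, Matrix.of_apply]
    rw [Finset.sum_eq_single (i0, c)]
    · simp [hX, hinv]
    · intro b _ hb; simp [hb]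
    · intro h; exact absurd (Finset.mem_univ _) h
  have hge : 4 ≤ X.rank := by
    have h1 : (E * X * Eᵀ).rank ≤ X.rank :=
      le_trans (Matrix.rank_mul_le_left (E * X) Eᵀ)
        (Matrix.rank_mul_le_right E X)
    rwa [hE, Matrix.rank_one, hcard] at h1
  omega
end
end

section
/- Let M_1, …, M_n ∈ SE(3) be represented as 4×4 homogeneous matrices, let M ∈ ℝ^{4n×4} be their vertical stack, let X ∈ ℝ^{4n×4n} be the block matrix whose (i,j)-th 4×4 block is M_i M_j⁻¹, and set L = n·I_{4n} − X. Then the null space of L is exactly 4-dimensional and is spanned by the columns of M; i.e., {v ∈ ℝ^{4n} : L v = 0} equals the column space of M. -/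
open Matrix

noncomputable section

lemma sum_mulVec_apply {n : ℕ} (A : Matrix Idx4 Idx4 ℝ) (f : Fin n → Idx4 → ℝ) (r : Idx4) :
    ∑ j, A.mulVec (f j) r = A.mulVec (∑ j, f j) r := by
  have := map_sum A.mulVecLin f Finset.univ
  simp only [Matrix.mulVecLin_apply] at this
  rw [this, Finset.sum_apply]

/-- with `L = n·I_{4n} − X`, the null space of `L` is exactly
4-dimensional and equals the column space of `M`. -/
theorem nullspace_of_L_is_column_space
    (n : ℕ) (hn : 1 ≤ n)
    (Ms : Fin n → Matrix Idx4 Idx4 ℝ) (hMs : ∀ i, IsSE3 (Ms i))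
    (M : Matrix (Fin n × Idx4) Idx4 ℝ)
    (hM : ∀ i r c, M (i, r) c = Ms i r c)
    (X : Matrix (Fin n × Idx4) (Fin n × Idx4) ℝ)
    (hX : ∀ i r j c, X (i, r) (j, c) = (Ms i * (Ms j)⁻¹) r c)
    (L : Matrix (Fin n × Idx4) (Fin n × Idx4) ℝ)
    (hL : L = (n : ℝ) • (1 : Matrix (Fin n × Idx4) (Fin n × Idx4) ℝ) - X) :
    LinearMap.ker L.mulVecLin
        = Submodule.span ℝ (Set.range fun c : Idx4 => fun p : Fin n × Idx4 => M p c) ∧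
      Module.finrank ℝ (LinearMap.ker L.mulVecLin) = 4 := by
  have hdet : ∀ i, IsUnit (Ms i).det := fun i => by
    rw [(hMs i).det_eq_one]; exact isUnit_one
  have hinv : ∀ j, (Ms j)⁻¹ * Ms j = 1 := fun j => Matrix.nonsing_inv_mul _ (hdet j)
  have hn0 : (n : ℝ) ≠ 0 := by positivity
  -- M.mulVec blockwise
  have hMmul : ∀ (x : Idx4 → ℝ) (i : Fin n) (r : Idx4),
      M.mulVec x (i, r) = (Ms i).mulVec x r := by
    intro x i r
    simp only [Matrix.mulVec, dotProduct, hM]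
  -- X.mulVec blockwise
  have hXmul : ∀ (v : Fin n × Idx4 → ℝ) (i : Fin n) (r : Idx4),
      X.mulVec v (i, r)
        = (Ms i).mulVec (∑ j, (Ms j)⁻¹.mulVec (fun c => v (j, c))) r := by
    intro v i r
    rw [← sum_mulVec_apply]
    simp only [Matrix.mulVec_mulVec]
    show ∑ p : Fin n × Idx4, X (i, r) p * v p = _
    rw [Fintype.sum_prod_type]
    congr 1
    funext j
    simp only [hX]
    rfl
  -- L.mulVec blockwise
  have hLmul : ∀ (v : Fin n × Idx4 → ℝ) (i : Fin n) (r : Idx4),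
      L.mulVec v (i, r)
        = (n : ℝ) * v (i, r)
          - (Ms i).mulVec (∑ j, (Ms j)⁻¹.mulVec (fun c => v (j, c))) r := by
    intro v i r
    rw [hL, Matrix.sub_mulVec, Matrix.smul_mulVec, Matrix.one_mulVec]
    simp [hXmul v i r]
  -- kernel = range of M.mulVecLin
  have hker : LinearMap.ker L.mulVecLin = LinearMap.range M.mulVecLin := by
    ext v
    simp only [LinearMap.mem_ker, LinearMap.mem_range, Matrix.mulVecLin_apply]
    constructor
    · intro hv
      refine ⟨(n : ℝ)⁻¹ • ∑ j, (Ms j)⁻¹.mulVec (fun c => v (j, c)), ?_⟩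
      funext p
      obtain ⟨i, r⟩ := p
      have h0 := congrFun hv (i, r)
      rw [hLmul] at h0
      simp only [Pi.zero_apply, sub_eq_zero] at h0
      rw [hMmul, Matrix.mulVec_smul, Pi.smul_apply, smul_eq_mul, ← h0,
        inv_mul_cancel_left₀ hn0]
    · rintro ⟨x, rfl⟩
      funext p
      obtain ⟨i, r⟩ := p
      rw [hLmul]
      have hconst : ∀ j : Fin n, (Ms j)⁻¹.mulVec (fun c => M.mulVec x (j, c)) = x := by
        intro j
        have : (fun c => M.mulVec x (j, c)) = (Ms j).mulVec x := by
          funext c; exact hMmul x j c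
        rw [this, Matrix.mulVec_mulVec, hinv, Matrix.one_mulVec]
      simp only [hconst, Finset.sum_const, Finset.card_univ, Fintype.card_fin]
      rw [hMmul]
      have : (n • x) = (n : ℝ) • x := by
        funext c; simp [nsmul_eq_mul]
      rw [this, Matrix.mulVec_smul]
      simp
  -- the span equals the range
  have hspan : Submodule.span ℝ (Set.range fun c : Idx4 => fun p : Fin n × Idx4 => M p c)
      = LinearMap.range M.mulVecLin := by
    rw [Matrix.range_mulVecLin]
    congr 1
  have hinj : Function.Injective M.mulVecLin := by
    intro x y hxy
    have i0 : Fin n := ⟨0, hn⟩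
    have h0 : (Ms i0).mulVec x = (Ms i0).mulVec y := by
      funext r
      have := congrFun hxy (i0, r)
      simpa [Matrix.mulVecLin_apply, hMmul] using this
    have := congrArg (fun u => (Ms i0)⁻¹.mulVec u) h0
    simpa [Matrix.mulVec_mulVec, hinv, Matrix.one_mulVec] using this
  refine ⟨by rw [hker, hspan], ?_⟩
  rw [hker, LinearMap.finrank_range_of_inj hinj]
  simp [Module.finrank_fintype_fun_eq_card]
end
end

section
/- Let M_1, …, M_n ∈ SE(3) be represented as 4×4 homogeneous matrices and let M ∈ ℝ^{4n×4} be their vertical stack. Let U ∈ ℝ^{4n×4} be any matrix whose column space equals the column space of M, and let PU ∈ ℝ^{n×4} be the matrix formed by the rows of U whose index is a multiple of four (the i-th row of PU is row 4i of U). Then rank(PU) = 1; in particular the solution space of PU·α = 0 is three-dimensional, and the equation PU·β = 1 (the all-ones vector in ℝⁿ) has a solution β ∈ ℝ⁴. -/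
open Matrix

noncomputable section

/-- if `U` has the same column space as the stack `M` and `PU` is the
matrix of the rows of `U` with index a multiple of four (the last row of each 4-row
block), then `rank PU = 1`, the solution space of `PU·α = 0` is three-dimensional,
and `PU·β = 1` has a solution. -/
theorem selector_rows_rank_one
    (n : ℕ) (hn : 1 ≤ n)
    (Ms : Fin n → Matrix Idx4 Idx4 ℝ) (hMs : ∀ i, IsSE3 (Ms i))
    (M : Matrix (Fin n × Idx4) Idx4 ℝ)
    (hM : ∀ i r c, M (i, r) c = Ms i r c)
    (U : Matrix (Fin n × Idx4) Idx4 ℝ)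
    (hU : Submodule.span ℝ (Set.range fun c : Idx4 => fun p : Fin n × Idx4 => U p c)
        = Submodule.span ℝ (Set.range fun c : Idx4 => fun p : Fin n × Idx4 => M p c))
    (PU : Matrix (Fin n) Idx4 ℝ)
    (hPU : ∀ i c, PU i c = U (i, Sum.inr 0) c) :
    PU.rank = 1 ∧
      Module.finrank ℝ (LinearMap.ker PU.mulVecLin) = 3 ∧
      ∃ β : Idx4 → ℝ, PU.mulVec β = fun _ => (1 : ℝ) := by
  classical
  set i0 : Fin n := ⟨0, hn⟩ with hi0
  -- bottom row of each block of M is [0 0 0 1]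
  have hMrow : ∀ (i : Fin n) (c : Idx4),
      M (i, Sum.inr 0) c = if c = Sum.inr 0 then 1 else 0 := by
    intro i c
    obtain ⟨R, t, -, -, hA⟩ := hMs i
    rw [hM, hA]
    cases c with
    | inl j => simp [homog]
    | inr j =>
      have hj : j = 0 := Subsingleton.elim _ _
      subst hj
      simp [homog, Matrix.one_apply]
  -- all rows of PU are equal, and equal on span of M-columns arguments
  have hconst : ∀ v ∈ Submodule.span ℝ
      (Set.range fun c : Idx4 => fun p : Fin n × Idx4 => M p c),
      ∀ i : Fin n, v (i, Sum.inr 0) = v (i0, Sum.inr 0) := by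
    intro v hv
    induction hv using Submodule.span_induction with
    | mem x hx =>
      obtain ⟨c, rfl⟩ := hx
      intro i
      simp [hMrow]
    | zero => intro i; rfl
    | add x y _ _ hx hy => intro i; simp [hx i, hy i]
    | smul a x _ hx => intro i; simp [hx i]
  have hUcolmem : ∀ c : Idx4,
      (fun p : Fin n × Idx4 => U p c) ∈ Submodule.span ℝ
        (Set.range fun c : Idx4 => fun p : Fin n × Idx4 => M p c) := by
    intro c
    rw [← hU]
    exact Submodule.subset_span ⟨c, rfl⟩
  set g : Idx4 → ℝ := fun c => U (i0, Sum.inr 0) c with hg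
  have hPUg : ∀ i c, PU i c = g c := by
    intro i c
    rw [hPU]
    exact hconst _ (hUcolmem c) i
  -- g is nonzero
  have hgne : ∃ c0, g c0 ≠ 0 := by
    by_contra h
    push_neg at h
    have hz : ∀ v ∈ Submodule.span ℝ
        (Set.range fun c : Idx4 => fun p : Fin n × Idx4 => U p c),
        v (i0, Sum.inr 0) = 0 := by
      intro v hv
      induction hv using Submodule.span_induction with
      | mem x hx =>
        obtain ⟨c, rfl⟩ := hx
        exact h c
      | zero => rfl
      | add x y _ _ hx hy => simp [hx, hy]
      | smul a x _ hx => simp [hx]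
    have hmem : (fun p : Fin n × Idx4 => M p (Sum.inr 0)) ∈ Submodule.span ℝ
        (Set.range fun c : Idx4 => fun p : Fin n × Idx4 => U p c) := by
      rw [hU]
      exact Submodule.subset_span ⟨Sum.inr 0, rfl⟩
    have := hz _ hmem
    rw [hMrow] at this
    simp at this
  obtain ⟨c0, hc0⟩ := hgne
  -- the β for part 3
  set β : Idx4 → ℝ := Pi.single c0 (g c0)⁻¹ with hβ
  have hβmul : PU.mulVec β = fun _ => (1 : ℝ) := by
    funext i
    simp only [Matrix.mulVec, dotProduct, hβ]
    rw [Finset.sum_eq_single c0]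
    · rw [hPUg, Pi.single_eq_same, mul_inv_cancel₀ hc0]
    · intro b _ hb
      rw [Pi.single_eq_of_ne hb, mul_zero]
    · intro hb; exact absurd (Finset.mem_univ c0) hb
  -- ones vector
  have hones : (fun _ : Fin n => (1 : ℝ)) ≠ 0 := by
    intro h
    have := congrFun h i0
    simp at this
  -- range of mulVecLin is the span of the ones vector
  have hrange : LinearMap.range PU.mulVecLin
      = Submodule.span ℝ {(fun _ : Fin n => (1 : ℝ))} := by
    apply le_antisymm
    · rintro x ⟨v, rfl⟩
      refine Submodule.mem_span_singleton.mpr ⟨g ⬝ᵥ v, ?_⟩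
      funext i
      simp [Matrix.mulVecLin_apply, Matrix.mulVec, dotProduct, hPUg]
    · rw [Submodule.span_singleton_le_iff_mem]
      exact ⟨β, by rw [Matrix.mulVecLin_apply, hβmul]⟩
  have hrank : PU.rank = 1 := by
    rw [Matrix.rank, hrange, finrank_span_singleton hones]
  refine ⟨hrank, ?_, β, hβmul⟩
  have hrn := LinearMap.finrank_range_add_finrank_ker PU.mulVecLin
  have hdom : Module.finrank ℝ (Idx4 → ℝ) = 4 := by
    rw [Module.finrank_pi]
    simp
  rw [hdom] at hrn
  have : Module.finrank ℝ ↥(LinearMap.range PU.mulVecLin) = 1 := hrank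
  omega
end
end

section
/- Let M_1, …, M_n ∈ SE(3) be represented as 4×4 homogeneous matrices and let M ∈ ℝ^{4n×4} be their vertical stack. Let U ∈ ℝ^{4n×4} have column space equal to the column space of M, let PU ∈ ℝ^{n×4} be the matrix formed by the rows of U with index a multiple of four, let α_1, α_2, α_3 ∈ ℝ⁴ be a basis of the null space of PU, and let β ∈ ℝ⁴ satisfy PU·β = 1 (the all-ones vector). Then the matrix U·[α_1 α_2 α_3 β] ∈ ℝ^{4n×4} has every row of index a multiple of four equal to [0 0 0 1], and its column space equals the column space of M; equivalently, there exists an invertible C ∈ ℝ^{4×4} of the block form [[B, w],[0ᵀ,1]] with B ∈ ℝ^{3×3} invertible and w ∈ ℝ³ such that U·[α_1 α_2 α_3 β] = M·C. -/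
open Matrix

noncomputable section

/-!
Because `M₁` is invertible, `M` has trivial kernel, so equal column spaces give `U = M D` with `D`
invertible. The rows `4i` of `U C₀` form `PU C₀ = [0 0 0 1]`, and `C₀` is invertible because
`PU β ≠ 0` puts `β` outside `ker PU = span α`. The last row of `C = D C₀` is the last row of
`M₁ C`, i.e. `[0 0 0 1]`, which is the block form `[[B, w], [0, 1]]` with `B` invertible.
-/

section ColumnSpace

variable {K : Type*} [CommRing K] {m n k : Type*} [Fintype n]

theorem Matrix.exists_eq_mul_of_range_mulVecLin_le [Fintype k] {A : Matrix m k K}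
    {B : Matrix m n K} (h : LinearMap.range A.mulVecLin ≤ LinearMap.range B.mulVecLin) :
    ∃ D : Matrix n k K, A = B * D := by
  have hcol : ∀ c, ∃ v, B *ᵥ v = A.col c := fun c => by
    simpa using h ((range_mulVecLin A).symm ▸ Submodule.subset_span ⟨c, rfl⟩)
  choose v hv using hcol
  refine ⟨(of v)ᵀ, ext fun p c => ?_⟩
  simpa [mul_apply, mulVec, dotProduct] using (congrFun (hv c) p).symm

variable [DecidableEq n]

theorem Matrix.exists_isUnit_eq_mul_of_range_mulVecLin_eq {A B : Matrix m n K}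
    (hB : Function.Injective B.mulVec)
    (h : LinearMap.range A.mulVecLin = LinearMap.range B.mulVecLin) :
    ∃ D : Matrix n n K, IsUnit D ∧ A = B * D := by
  obtain ⟨D, rfl⟩ := exists_eq_mul_of_range_mulVecLin_le h.le
  obtain ⟨E, hE⟩ := exists_eq_mul_of_range_mulVecLin_le h.ge
  have hDE : D * E = 1 := ext_iff_mulVec.mpr fun v => hB <| by
    rw [mulVec_mulVec, mulVec_mulVec, Matrix.mul_one, ← Matrix.mul_assoc, ← hE]
  exact ⟨D, ⟨⟨D, E, hDE, mul_eq_one_comm.mp hDE⟩, rfl⟩, rfl⟩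

theorem Matrix.range_mulVecLin_mul_of_isUnit (A : Matrix m n K) {C : Matrix n n K}
    (hC : IsUnit C) : LinearMap.range (A * C).mulVecLin = LinearMap.range A.mulVecLin := by
  rw [mulVecLin_mul, LinearMap.range_comp_of_range_eq_top]
  exact LinearMap.range_eq_top.mpr (mulVec_surjective_iff_isUnit.mpr hC)

end ColumnSpace

theorem Matrix.mul_apply_eq_of_row_eq {R m m' k l : Type*} [NonUnitalNonAssocSemiring R]
    [Fintype k] {A : Matrix m k R} {B : Matrix m' k R} {p : m} {q : m'} (h : ∀ j, A p j = B q j)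
    (X : Matrix k l R) (c : l) : (A * X) p c = (B * X) q c := by
  simp only [mul_apply, h]

theorem Matrix.mulVec_injective_of_row_eq_of_isUnit {K m n : Type*} [Field K] [Fintype n]
    [DecidableEq n] {A : Matrix m n K} {B : Matrix n n K} (f : n → m)
    (hf : ∀ r c, A (f r) c = B r c) (hB : IsUnit B) : Function.Injective A.mulVec := by
  refine fun x y hxy => mulVec_injective_iff_isUnit.mpr hB (funext fun r => ?_)
  simpa only [mulVec, dotProduct, hf] using congrFun hxy (f r)

theorem LinearIndependent.sum_elim_unique {K V ι ι' : Type*} [DivisionRing K] [AddCommGroup V]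
    [Module K V] [Unique ι'] {v : ι → V} {x : V} (hv : LinearIndependent K v)
    (hx : x ∉ Submodule.span K (Set.range v)) :
    LinearIndependent K (Sum.elim v fun _ : ι' => x) := by
  refine hv.sum_type (linearIndependent_unique_iff (v := fun _ : ι' => x) |>.mpr ?_) ?_
  · rintro rfl
    exact hx (Submodule.zero_mem _)
  · rw [Set.range_const]
    exact Submodule.disjoint_span_singleton_of_notMem hx

section BlockForm

variable {R : Type*} [CommRing R] {m : Type*}

theorem Matrix.eq_fromBlocks_of_row_inr_eq {C : Matrix (m ⊕ Fin 1) (m ⊕ Fin 1) R}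
    (h : ∀ c, C (Sum.inr 0) c = Sum.elim (fun _ => 0) (fun _ => 1) c) :
    C = fromBlocks C.toBlocks₁₁ (of fun i _ => C (Sum.inl i) (Sum.inr 0)) 0 1 := by
  conv_lhs => rw [← fromBlocks_toBlocks C]
  congr
  · ext i j
    fin_cases j
    rfl
  · ext i j
    simpa [toBlocks₂₁, Subsingleton.elim i 0] using h (Sum.inl j)
  · ext i j
    fin_cases i; fin_cases j
    simpa [toBlocks₂₂] using h (Sum.inr 0)

theorem Matrix.exists_fromBlocks_of_isUnit_of_row_inr_eq [Fintype m] [DecidableEq m]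
    {C : Matrix (m ⊕ Fin 1) (m ⊕ Fin 1) R} (hC : IsUnit C)
    (h : ∀ c, C (Sum.inr 0) c = Sum.elim (fun _ => 0) (fun _ => 1) c) :
    ∃ (B : Matrix m m R) (w : m → R),
      IsUnit B.det ∧ C = fromBlocks B (of fun i _ => w i) 0 1 := by
  refine ⟨_, _, ?_, eq_fromBlocks_of_row_inr_eq h⟩
  have hdet := (isUnit_iff_isUnit_det C).mp hC
  rwa [eq_fromBlocks_of_row_inr_eq h, det_fromBlocks_zero₂₁, det_one, mul_one] at hdet

end BlockForm

theorem IsSE3.mul_apply_inr {A : Matrix Idx4 Idx4 ℝ} (hA : IsSE3 A) {l : Type*}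
    (X : Matrix Idx4 l ℝ) (c : l) : (A * X) (Sum.inr 0) c = X (Sum.inr 0) c := by
  obtain ⟨R, t, -, -, rfl⟩ := hA
  simp [homog, mul_apply, Fintype.sum_sum_type]

theorem IsSE3.isUnit {A : Matrix Idx4 Idx4 ℝ} (hA : IsSE3 A) : IsUnit A := by
  obtain ⟨R, t, -, hdet, rfl⟩ := hA
  simp [isUnit_iff_isUnit_det, homog, hdet]

/-- with `α_1, α_2, α_3` a basis of the null space of `PU` and `β`
solving `PU·β = 1`, the matrix `U·[α_1 α_2 α_3 β]` has every fourth row equal to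
`[0 0 0 1]` and its column space equals that of `M`; equivalently it equals `M·C`
for an invertible `C = [[B, w],[0,1]]` with `B` invertible. -/
theorem recovering_euclidean_basis
    (n : ℕ) (hn : 1 ≤ n)
    (Ms : Fin n → Matrix Idx4 Idx4 ℝ) (hMs : ∀ i, IsSE3 (Ms i))
    (M : Matrix (Fin n × Idx4) Idx4 ℝ)
    (hM : ∀ i r c, M (i, r) c = Ms i r c)
    (U : Matrix (Fin n × Idx4) Idx4 ℝ)
    (hU : Submodule.span ℝ (Set.range fun c : Idx4 => fun p : Fin n × Idx4 => U p c)
        = Submodule.span ℝ (Set.range fun c : Idx4 => fun p : Fin n × Idx4 => M p c))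
    (PU : Matrix (Fin n) Idx4 ℝ)
    (hPU : ∀ i c, PU i c = U (i, Sum.inr 0) c)
    (α : Fin 3 → (Idx4 → ℝ))
    (hαind : LinearIndependent ℝ α)
    (hαspan : Submodule.span ℝ (Set.range α) = LinearMap.ker PU.mulVecLin)
    (β : Idx4 → ℝ) (hβ : PU.mulVec β = fun _ => (1 : ℝ))
    (C0 : Matrix Idx4 Idx4 ℝ)
    (hC0 : ∀ r c, C0 r c = Sum.elim (fun k : Fin 3 => α k r) (fun _ : Fin 1 => β r) c) :
    (∀ (i : Fin n) (c : Idx4),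
        (U * C0) (i, Sum.inr 0) c = Sum.elim (fun _ : Fin 3 => (0 : ℝ)) (fun _ => 1) c) ∧
      Submodule.span ℝ (Set.range fun c : Idx4 => fun p : Fin n × Idx4 => (U * C0) p c)
        = Submodule.span ℝ (Set.range fun c : Idx4 => fun p : Fin n × Idx4 => M p c) ∧
      ∃ (B : Matrix (Fin 3) (Fin 3) ℝ) (w : Fin 3 → ℝ),
        IsUnit B.det ∧
        U * C0 = M * Matrix.fromBlocks B (Matrix.of fun i (_ : Fin 1) => w i) 0 1 := by
  have hMinj : Function.Injective M.mulVec :=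
    mulVec_injective_of_row_eq_of_isUnit (Prod.mk ⟨0, hn⟩) (hM _) (hMs _).isUnit
  have hU' : LinearMap.range U.mulVecLin = LinearMap.range M.mulVecLin := by
    rw [range_mulVecLin, range_mulVecLin]
    exact hU
  obtain ⟨D, hD, hUD⟩ := exists_isUnit_eq_mul_of_range_mulVecLin_eq hMinj hU'
  have hC0col : C0.col = Sum.elim α fun _ => β := by
    ext c r
    rw [col_apply, hC0]
    cases c <;> rfl
  have hβα : β ∉ Submodule.span ℝ (Set.range α) := by
    rw [hαspan, LinearMap.mem_ker, mulVecLin_apply, hβ]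
    exact fun h => one_ne_zero (congrFun h ⟨0, hn⟩)
  have hC0unit : IsUnit C0 :=
    linearIndependent_cols_iff_isUnit.mp (hC0col ▸ hαind.sum_elim_unique hβα)
  have hrow : ∀ i c, (U * C0) (i, Sum.inr 0) c
      = Sum.elim (fun _ : Fin 3 => (0 : ℝ)) (fun _ => 1) c := by
    intro i c
    rw [mul_apply_eq_of_row_eq (fun j => (hPU i j).symm)]
    change (PU *ᵥ C0.col c) i = _
    rw [hC0col]
    cases c with
    | inl k => exact congrFun (hαspan.le (Submodule.subset_span ⟨k, rfl⟩) : PU *ᵥ α k = 0) i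
    | inr _ => exact congrFun hβ i
  have hUC : U * C0 = M * (D * C0) := by rw [hUD, Matrix.mul_assoc]
  have hCrow : ∀ c, (D * C0) (Sum.inr 0) c
      = Sum.elim (fun _ : Fin 3 => (0 : ℝ)) (fun _ => 1) c := fun c => by
    rw [← (hMs ⟨0, hn⟩).mul_apply_inr (D * C0), ← mul_apply_eq_of_row_eq (hM ⟨0, hn⟩ _),
      ← hUC]
    exact hrow _ c
  obtain ⟨B, w, hB, hC⟩ := exists_fromBlocks_of_isUnit_of_row_inr_eq (hD.mul hC0unit) hCrow
  have hspan := range_mulVecLin_mul_of_isUnit M (hD.mul hC0unit)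
  rw [range_mulVecLin, range_mulVecLin, ← hUC] at hspan
  exact ⟨hrow, hspan, B, w, hB, hC ▸ hUC⟩
end
end

section
/- Let G = (V, E) be a finite simple undirected graph on vertices {1, …, n}, let M_1, …, M_n ∈ SE(3) be represented as 4×4 homogeneous matrices, and let M ∈ ℝ^{4n×4} be their vertical stack. Define L ∈ ℝ^{4n×4n} blockwise by: the (i,i)-th 4×4 block of L is d_i · I_4 where d_i is the degree of vertex i in G, the (i,j)-th block for (i,j) ∈ E is −M_i M_j⁻¹, and all remaining blocks are zero. Then L·M = 0. (This matrix L equals ((D−A) ⊗ 1_{4×4}) ∘ X, where A and D are the adjacency and degree matrices of G, ⊗ is the Kronecker product, ∘ the Hadamard product, and X the block matrix of relative motions with X_{ii} = I_4 and X_{ij} = M_i M_j⁻¹ on edges.) -/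
open Matrix

noncomputable section

/-- for a finite simple graph `G`, the block matrix `L` whose (i,i)-th
4×4 block is `deg(i)·I_4`, whose (i,j)-th block is `−M_i M_j⁻¹` on edges and `0`
otherwise (i.e. `L = ((D−A) ⊗ 1_{4×4}) ∘ X`), annihilates the stack `M`: `L·M = 0`. -/
theorem block_laplacian_annihilates_stack
    (n : ℕ) (hn : 1 ≤ n)
    (G : SimpleGraph (Fin n)) [DecidableRel G.Adj]
    (Ms : Fin n → Matrix Idx4 Idx4 ℝ) (hMs : ∀ i, IsSE3 (Ms i))
    (M : Matrix (Fin n × Idx4) Idx4 ℝ)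
    (hM : ∀ i r c, M (i, r) c = Ms i r c)
    (L : Matrix (Fin n × Idx4) (Fin n × Idx4) ℝ)
    (hL : ∀ i r j c, L (i, r) (j, c) =
      if i = j then (G.degree i : ℝ) * (if r = c then 1 else 0)
      else if G.Adj i j then -((Ms i * (Ms j)⁻¹) r c) else 0) :
    L * M = 0 := by
  have hinv : ∀ j, IsUnit (Ms j).det := by
    intro j
    obtain ⟨R, t, hR, hdet, hA⟩ := hMs j
    rw [hA, homog, Matrix.det_fromBlocks_zero₂₁, hdet, Matrix.det_one, one_mul]
    exact isUnit_one
  ext ⟨i, r⟩ c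
  rw [Matrix.mul_apply, Fintype.sum_prod_type]
  have key : ∀ j, (∑ s, L (i, r) (j, s) * M (j, s) c) =
      (if i = j then (G.degree i : ℝ) * Ms i r c else 0) +
      (if G.Adj i j then -(Ms i r c) else 0) := by
    intro j
    by_cases hij : i = j
    · subst hij
      simp only [hL, hM, if_pos rfl, G.irrefl, if_false, add_zero]
      rw [Finset.sum_eq_single r]
      · simp
      · intro s _ hs; simp [Ne.symm hs]
      · simp
    · simp only [hL, hM, if_neg hij, if_neg hij, zero_add]
      by_cases hadj : G.Adj i j
      · simp only [if_pos hadj]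
        have : (∑ s, -((Ms i * (Ms j)⁻¹) r s) * Ms j s c)
            = -((Ms i * (Ms j)⁻¹ * Ms j) r c) := by
          rw [Matrix.mul_apply]
          simp [Finset.sum_neg_distrib]
        rw [this, Matrix.mul_assoc, Matrix.nonsing_inv_mul _ (hinv j), Matrix.mul_one]
      · simp [if_neg hadj]
  simp only [key]
  rw [Finset.sum_add_distrib, Finset.sum_ite_eq Finset.univ i (fun _ => (G.degree i : ℝ) * Ms i r c)]
  have : (∑ j, if G.Adj i j then -(Ms i r c) else 0)
      = -((G.degree i : ℝ) * Ms i r c) := by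
    rw [Finset.sum_ite, Finset.sum_const_zero, add_zero, Finset.sum_const,
      ← SimpleGraph.neighborFinset_eq_filter, SimpleGraph.card_neighborFinset_eq_degree,
      nsmul_eq_mul]
    ring
  rw [this]
  simp
end
end

section
/- Let G = (V, E) be a finite simple undirected connected graph on vertices {1, …, n} with strictly positive symmetric edge weights w_ij on its edges, let M_1, …, M_n ∈ SE(3) be represented as 4×4 homogeneous matrices, and let M ∈ ℝ^{4n×4} be their vertical stack. Define L ∈ ℝ^{4n×4n} blockwise by: the (i,i)-th block is (Σ_{j : (i,j)∈E} w_ij)·I_4, the (i,j)-th block for (i,j) ∈ E is −w_ij·M_i M_j⁻¹, and all remaining blocks are zero. Then the null space of L is exactly 4-dimensional and equals the column space of M; i.e., the columns of M form a basis of {v ∈ ℝ^{4n} : Lv = 0}. -/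
open Matrix

noncomputable section

lemma isUnit_det_of_IsSE3 {A : Matrix Idx4 Idx4 ℝ} (h : IsSE3 A) : IsUnit A.det := by
  obtain ⟨R, t, hR, hdet, rfl⟩ := h
  rw [homog, Matrix.det_fromBlocks_zero₂₁, hdet, Matrix.det_one, one_mul]
  exact isUnit_one

lemma scalar_lap {n : ℕ} (G : SimpleGraph (Fin n)) [DecidableRel G.Adj] (hG : G.Connected)
    (w : Fin n → Fin n → ℝ)
    (hw_pos : ∀ i j, G.Adj i j → 0 < w i j)
    (hw_symm : ∀ i j, w i j = w j i)
    (hw_zero : ∀ i j, ¬ G.Adj i j → w i j = 0)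
    (x : Fin n → ℝ)
    (hx : ∀ i, (∑ j, w i j) * x i = ∑ j, w i j * x j)
    (i j : Fin n) : x i = x j := by
  have hnn : ∀ a b, 0 ≤ w a b := fun a b => by
    by_cases h : G.Adj a b
    · exact (hw_pos _ _ h).le
    · simp [hw_zero _ _ h]
  have hA : ∑ a, ∑ b, w a b * x a * x a = ∑ a, ∑ b, w a b * x a * x b := by
    have h1 : ∀ a, ∑ b, w a b * x a * x a = ((∑ b, w a b) * x a) * x a := by
      intro a; rw [Finset.sum_mul, Finset.sum_mul]
    have h2 : ∀ a, ∑ b, w a b * x a * x b = (∑ b, w a b * x b) * x a := by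
      intro a; rw [Finset.sum_mul]; apply Finset.sum_congr rfl; intros; ring
    calc ∑ a, ∑ b, w a b * x a * x a = ∑ a, ((∑ b, w a b) * x a) * x a :=
          Finset.sum_congr rfl fun a _ => h1 a
      _ = ∑ a, (∑ b, w a b * x b) * x a :=
          Finset.sum_congr rfl fun a _ => by rw [hx a]
      _ = ∑ a, ∑ b, w a b * x a * x b := Finset.sum_congr rfl fun a _ => (h2 a).symm
  have hB : ∑ a, ∑ b, w a b * x b * x b = ∑ a, ∑ b, w a b * x a * x a := by
    rw [Finset.sum_comm]
    apply Finset.sum_congr rfl; intro a _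
    apply Finset.sum_congr rfl; intro b _
    rw [hw_symm]
  have hQ : ∑ a, ∑ b, w a b * (x a - x b)^2 = 0 := by
    have key : ∀ a b, w a b * (x a - x b)^2
        = (w a b * x a * x a - 2 * (w a b * x a * x b)) + w a b * x b * x b := by
      intro a b; ring
    calc ∑ a, ∑ b, w a b * (x a - x b)^2
        = ∑ a, ∑ b, ((w a b * x a * x a - 2 * (w a b * x a * x b)) + w a b * x b * x b) :=
          Finset.sum_congr rfl fun a _ => Finset.sum_congr rfl fun b _ => key a b
      _ = ((∑ a, ∑ b, w a b * x a * x a) - 2 * ∑ a, ∑ b, w a b * x a * x b)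
            + ∑ a, ∑ b, w a b * x b * x b := by
          simp [Finset.sum_add_distrib, Finset.sum_sub_distrib, Finset.mul_sum]
      _ = 0 := by rw [hB, ← hA]; ring
  have hterm : ∀ a b, w a b * (x a - x b)^2 = 0 := by
    intro a b
    have h1 : ∀ a ∈ (Finset.univ : Finset (Fin n)),
        0 ≤ ∑ b, w a b * (x a - x b)^2 := fun a _ =>
      Finset.sum_nonneg fun b _ => mul_nonneg (hnn a b) (sq_nonneg _)
    have h2 := (Finset.sum_eq_zero_iff_of_nonneg h1).mp hQ a (Finset.mem_univ a)
    have h3 : ∀ b ∈ (Finset.univ : Finset (Fin n)),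
        0 ≤ w a b * (x a - x b)^2 := fun b _ => mul_nonneg (hnn a b) (sq_nonneg _)
    exact (Finset.sum_eq_zero_iff_of_nonneg h3).mp h2 b (Finset.mem_univ b)
  have hadj : ∀ a b, G.Adj a b → x a = x b := by
    intro a b hab
    rcases mul_eq_zero.mp (hterm a b) with h | h
    · exact absurd h (hw_pos a b hab).ne'
    · have := pow_eq_zero_iff (n := 2) (by norm_num) |>.mp h
      linarith [sub_eq_zero.mp this]
  obtain ⟨p⟩ := hG i j
  induction p with
  | nil => rfl
  | cons h p ih => exact (hadj _ _ h).trans ih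

/-- local auxiliary: the "rotated back" vector associated to `v`. -/
def uvec {n : ℕ} (Ms : Fin n → Matrix Idx4 Idx4 ℝ) (v : Fin n × Idx4 → ℝ) (i : Fin n) :
    Idx4 → ℝ :=
  (Ms i)⁻¹ *ᵥ (fun r => v (i, r))

/-- for a connected simple graph with strictly positive symmetric edge
weights, the null space of the weighted block Laplacian `L` is exactly 4-dimensional
and equals the column space of the stack `M`; the columns of `M` form a basis of it. -/
theorem connected_weighted_laplacian_nullspace
    (n : ℕ) (hn : 1 ≤ n)
    (G : SimpleGraph (Fin n)) [DecidableRel G.Adj] (hG : G.Connected)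
    (w : Fin n → Fin n → ℝ)
    (hw_pos : ∀ i j, G.Adj i j → 0 < w i j)
    (hw_symm : ∀ i j, w i j = w j i)
    (hw_zero : ∀ i j, ¬ G.Adj i j → w i j = 0)
    (Ms : Fin n → Matrix Idx4 Idx4 ℝ) (hMs : ∀ i, IsSE3 (Ms i))
    (M : Matrix (Fin n × Idx4) Idx4 ℝ)
    (hM : ∀ i r c, M (i, r) c = Ms i r c)
    (L : Matrix (Fin n × Idx4) (Fin n × Idx4) ℝ)
    (hL : ∀ i r j c, L (i, r) (j, c) =
      if i = j then (∑ k ∈ G.neighborFinset i, w i k) * (if r = c then 1 else 0)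
      else if G.Adj i j then -(w i j) * ((Ms i * (Ms j)⁻¹) r c) else 0) :
    LinearMap.ker L.mulVecLin
        = Submodule.span ℝ (Set.range fun c : Idx4 => fun p : Fin n × Idx4 => M p c) ∧
      LinearIndependent ℝ (fun c : Idx4 => fun p : Fin n × Idx4 => M p c) ∧
      Module.finrank ℝ (LinearMap.ker L.mulVecLin) = 4 := by
  classical
  have i0 : Fin n := ⟨0, hn⟩
  have hdet : ∀ i, IsUnit (Ms i).det := fun i => isUnit_det_of_IsSE3 (hMs i)
  have hMi : ∀ i, Ms i * (Ms i)⁻¹ = 1 := fun i => Matrix.mul_nonsing_inv _ (hdet i)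
  have hiM : ∀ i, (Ms i)⁻¹ * Ms i = 1 := fun i => Matrix.nonsing_inv_mul _ (hdet i)
  have hcancel : ∀ i (x : Idx4 → ℝ), Ms i *ᵥ x = 0 → x = 0 := by
    intro i x h
    have h2 := congrArg (fun y => (Ms i)⁻¹ *ᵥ y) h
    simpa [Matrix.mulVec_mulVec, hiM i] using h2
  have hdeg : ∀ i, (∑ k ∈ G.neighborFinset i, w i k) = ∑ j, w i j := by
    intro i
    exact Finset.sum_subset (Finset.subset_univ _)
      (fun k _ hk => hw_zero i k (by simpa using hk))
  have hvu : ∀ (v : Fin n × Idx4 → ℝ) i, (fun r => v (i, r)) = Ms i *ᵥ uvec Ms v i := by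
    intro v i
    rw [uvec, Matrix.mulVec_mulVec, hMi i, Matrix.one_mulVec]
  -- pointwise formula for L *ᵥ v
  have hLv : ∀ (v : Fin n × Idx4 → ℝ) (i : Fin n) (r : Idx4), (L *ᵥ v) (i, r)
      = (∑ j, w i j) * v (i, r)
        - ∑ j, w i j * ((Ms i * (Ms j)⁻¹) *ᵥ (fun c => v (j, c))) r := by
    intro v i r
    have expand : (L *ᵥ v) (i, r) = ∑ j, ∑ c, L (i, r) (j, c) * v (j, c) := by
      simp [Matrix.mulVec, dotProduct, Fintype.sum_prod_type]
    have hterm : ∀ j, ∑ c, L (i, r) (j, c) * v (j, c)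
        = (if i = j then (∑ k, w i k) * v (i, r) else 0)
          - w i j * ((Ms i * (Ms j)⁻¹) *ᵥ (fun c => v (j, c))) r := by
      intro j
      by_cases hij : i = j
      · subst hij
        have hwii : w i i = 0 := hw_zero i i (G.irrefl)
        simp [hL, hwii, hdeg i, ite_mul, mul_ite]
      · by_cases hadj : G.Adj i j
        · simp only [hL, if_neg hij, if_pos hadj]
          simp only [Matrix.mulVec, dotProduct, Finset.mul_sum, mul_assoc, neg_mul, zero_sub,
            ← Finset.sum_neg_distrib]
        · have hw0 : w i j = 0 := hw_zero _ _ hadj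
          simp [hL, hij, hadj, hw0]
    rw [expand, Finset.sum_congr rfl fun j _ => hterm j, Finset.sum_sub_distrib]
    congr 1
    simp
  -- row formula in vector form
  have hrow : ∀ (v : Fin n × Idx4 → ℝ) (i : Fin n), (fun r => (L *ᵥ v) (i, r))
      = Ms i *ᵥ ((∑ j, w i j) • uvec Ms v i - ∑ j, w i j • uvec Ms v j) := by
    intro v i
    funext r
    rw [hLv v i r, Matrix.mulVec_sub]
    have h1 : Ms i *ᵥ ((∑ j, w i j) • uvec Ms v i) = (∑ j, w i j) • (fun r => v (i, r)) := by
      rw [Matrix.mulVec_smul, ← hvu]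
    have h2 : Ms i *ᵥ (∑ j, w i j • uvec Ms v j)
        = ∑ j, w i j • ((Ms i * (Ms j)⁻¹) *ᵥ (fun c => v (j, c))) := by
      simp only [← Matrix.mulVecLin_apply, map_sum, LinearMap.map_smul]
      refine Finset.sum_congr rfl fun j _ => ?_
      simp [Matrix.mulVecLin_apply, uvec, Matrix.mulVec_mulVec]
    rw [h1, h2]
    simp [Finset.sum_apply]
  -- characterization of the kernel
  have key : ∀ v : Fin n × Idx4 → ℝ, L *ᵥ v = 0 ↔
      ∀ i, (∑ j, w i j) • uvec Ms v i = ∑ j, w i j • uvec Ms v j := by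
    intro v
    constructor
    · intro h i
      have h0 : (fun r => (L *ᵥ v) (i, r)) = 0 := by funext r; rw [h]; rfl
      have h1 := hcancel i _ ((hrow v i) ▸ h0)
      exact sub_eq_zero.mp h1
    · intro h
      funext p
      obtain ⟨i, r⟩ := p
      have h1 := hrow v i
      rw [h i, sub_self, Matrix.mulVec_zero] at h1
      exact congrFun h1 r
  -- columns of M are in the kernel
  have hcol : ∀ c, L *ᵥ (fun p => M p c) = 0 := by
    intro c
    rw [key]
    intro i
    have hu : ∀ j, uvec Ms (fun p => M p c) j = Pi.single c 1 := by
      intro j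
      have hcolj : (fun r => M (j, r) c) = Ms j *ᵥ Pi.single c 1 := by
        funext r
        rw [hM]
        simp [Matrix.mulVec, dotProduct, Pi.single_apply]
      rw [uvec, hcolj, Matrix.mulVec_mulVec, hiM j, Matrix.one_mulVec]
    simp [hu, ← Finset.sum_smul]
  -- kernel equals span
  have hker : LinearMap.ker L.mulVecLin
      = Submodule.span ℝ (Set.range fun c : Idx4 => fun p : Fin n × Idx4 => M p c) := by
    apply le_antisymm
    · intro v hv
      have hv0 : L *ᵥ v = 0 := by
        have := LinearMap.mem_ker.mp hv
        rwa [Matrix.mulVecLin_apply] at this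
      have hk := (key v).mp hv0
      have hconst : ∀ i c, uvec Ms v i c = uvec Ms v i0 c := by
        intro i c
        refine scalar_lap G hG w hw_pos hw_symm hw_zero (fun i => uvec Ms v i c) ?_ i i0
        intro a
        have h1 := congrFun (hk a) c
        simpa [Finset.sum_apply] using h1
      rw [Submodule.mem_span_range_iff_exists_fun]
      refine ⟨uvec Ms v i0, ?_⟩
      funext p
      obtain ⟨i, r⟩ := p
      have h1 : v (i, r) = (Ms i *ᵥ uvec Ms v i) r := congrFun (hvu v i) r
      rw [Finset.sum_apply]
      rw [h1]
      simp only [Pi.smul_apply, smul_eq_mul, Matrix.mulVec, dotProduct]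
      refine Finset.sum_congr rfl fun c _ => ?_
      rw [hM, hconst i c, mul_comm]
    · rw [Submodule.span_le]
      rintro _ ⟨c, rfl⟩
      exact LinearMap.mem_ker.mpr (by rw [Matrix.mulVecLin_apply]; exact hcol c)
  -- linear independence
  have hind : LinearIndependent ℝ (fun c : Idx4 => fun p : Fin n × Idx4 => M p c) := by
    rw [Fintype.linearIndependent_iff]
    intro g hg
    have h0 : Ms i0 *ᵥ g = 0 := by
      funext r
      have h1 := congrFun hg (i0, r)
      simpa [Finset.sum_apply, hM, Matrix.mulVec, dotProduct, mul_comm] using h1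
    have := hcancel i0 g h0
    exact fun c => congrFun this c
  refine ⟨hker, hind, ?_⟩
  rw [hker, finrank_span_eq_card hind]
  simp
end
end
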